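/- For every even integer n ≥ 4, the maximum number of triples in an S_3-free cgh on Ω_n equals n(n−2)/2; that is, ex_circ(n, S_3) = n(n−2)/2. -/

import Mathlib

/-- The list of points of `ZMod n` occurs in this clockwise cyclic order:
anchored at the first point, the clockwise arc-distances from it are
positive and strictly increasing. -/
def CWList (n : ℕ) : List (ZMod n) → Prop
  | [] => True
  | a :: l => ((0 : ℕ) :: l.map fun b => (b - a).val).Chain' (· < ·)

/-- `H` is a 3-uniform (convex geometric) hypergraph on `Ω_n = ZMod n`. -/
def IsCgh (n : ℕ) (H : Finset (Finset (ZMod n))) : Prop :=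
  ∀ e ∈ H, e.card = 3

def nabla (n : ℕ) : ℕ :=
  if Odd n then n * (n - 1) * (n + 1) / 24 else n * (n - 2) * (n + 2) / 24

/-- `H` contains a copy of the configuration `S₃`: two triples sharing exactly
the vertex `v`, with the five vertices in clockwise cyclic order `v, a₁, b₁, a₂, b₂`. -/
def HasS3 (n : ℕ) (H : Finset (Finset (ZMod n))) : Prop :=
  ∃ v a₁ a₂ b₁ b₂ : ZMod n,
    CWList n [v, a₁, b₁, a₂, b₂] ∧
    ({v, a₁, a₂} : Finset (ZMod n)) ∈ H ∧ ({v, b₁, b₂} : Finset (ZMod n)) ∈ H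

/-!
Upper bound: charge each triple `T` to a vertex `v ∈ T` when the side of `T` opposite `v` is a
diagonal of the polygon, and also charge the triple `{v, v+1, v+2}` to `v`. Every triple is
charged at least twice. For fixed `v`, the diagonals opposite `v` in triples of an `S₃`-free `H`
are pairwise non-crossing chords between the points `v+1, …, v+(n-1)`, and such chords of length
at least two number at most `n - 3`; so each vertex carries at most `n - 2` charges and
`2|H| ≤ n(n-2)`.

Lower bound: the triples containing one of the `n/2` sides `{2k, 2k+1}`. Two triples forming an
`S₃` at `v` would each contain such a side, which forces `v` to be both even and odd.
-/

open Finset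

def Crosses (c d : ℕ × ℕ) : Prop :=
  c.1 < d.1 ∧ d.1 < c.2 ∧ c.2 < d.2

theorem card_le_of_forall_not_crosses {F : Finset (ℕ × ℕ)} {a b : ℕ}
    (hF : ∀ c ∈ F, a ≤ c.1 ∧ c.1 + 2 ≤ c.2 ∧ c.2 ≤ b)
    (hcross : ∀ c ∈ F, ∀ d ∈ F, ¬ Crosses c d) : #F ≤ b - a - 1 := by
  -- Mark `c` by the least `x > c.1` with `(x, c.2) ∈ F` or `x = c.2 - 1`. The marks lie in
  -- `(a, b)`, and two chords with the same mark would cross.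
  have hmark : ∀ c ∈ F, ∃ x, c.1 < x ∧ x < c.2 ∧ ((x, c.2) ∈ F ∨ x + 1 = c.2) ∧
      ∀ y, c.1 < y → y < x → (y, c.2) ∉ F := by
    intro c hc
    have hc' := hF c hc
    obtain ⟨x, ⟨hcx, hx⟩, hmin⟩ := wellFounded_lt.has_min
      {x | c.1 < x ∧ ((x, c.2) ∈ F ∨ x + 1 = c.2)} ⟨c.2 - 1, by omega, by omega⟩
    refine ⟨x, hcx, ?_, hx, fun y hy hyx hyF => hmin y ⟨hy, .inl hyF⟩ hyx⟩
    rcases hx with hx | hx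
    · have := hF _ hx; omega
    · omega
  choose! f hf using hmark
  have hinj : Set.InjOn f F := by
    intro c hc d hd hfcd
    wlog hcd : c.2 ≤ d.2 generalizing c d
    · exact (this hd hc hfcd.symm (by omega)).symm
    obtain ⟨hc₁, hc₂, -, hcmin⟩ := hf c hc
    obtain ⟨hd₁, hd₂, hdF, hdmin⟩ := hf d hd
    rw [← hfcd] at hd₁ hd₂ hdF hdmin
    rcases hcd.lt_or_eq with hlt | heq
    · rcases hdF with hx | hx
      · exact absurd ⟨hc₁, hc₂, hlt⟩ (hcross c hc _ hx)
      · omega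
    · rcases lt_trichotomy c.1 d.1 with h | h | h
      · exact absurd (heq ▸ hd) (hcmin d.1 h hd₁)
      · exact Prod.ext h heq
      · exact absurd (heq ▸ hc) (hdmin c.1 h hc₁)
  calc #F ≤ #(Ioo a b) := card_le_card_of_injOn f (fun c hc => by
        have := hF c hc; have := hf c hc; simp only [coe_Ioo, Set.mem_Ioo]; omega) hinj
    _ = b - a - 1 := Nat.card_Ioo a b

section Polygon

variable {n : ℕ}

theorem ZMod.natCast_eq_natCast_iff_of_lt {i j : ℕ} (hi : i < n) (hj : j < n) :
    (i : ZMod n) = j ↔ i = j :=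
  ⟨fun h => by rw [← ZMod.val_cast_of_lt hi, h, ZMod.val_cast_of_lt hj], congrArg _⟩

theorem ZMod.val_add_one_eq_or [NeZero n] (x : ZMod n) :
    (x + 1).val = x.val + 1 ∨ x.val + 1 = n ∧ (x + 1).val = 0 := by
  have hx : x + 1 = ((x.val + 1 : ℕ) : ZMod n) := by push_cast [ZMod.natCast_zmod_val]; rfl
  rw [hx, ZMod.val_natCast]
  rcases Nat.lt_or_ge (x.val + 1) n with h | h
  · exact .inl (Nat.mod_eq_of_lt h)
  · have h' : x.val + 1 = n := le_antisymm (ZMod.val_lt x) h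
    exact .inr ⟨h', by rw [h', Nat.mod_self]⟩

theorem cwList_five_iff {v a b c d : ZMod n} :
    CWList n [v, a, b, c, d] ↔ 0 < (a - v).val ∧ (a - v).val < (b - v).val ∧
      (b - v).val < (c - v).val ∧ (c - v).val < (d - v).val := by
  change List.IsChain _ _ ↔ _
  simp only [List.map_cons, List.map_nil, List.isChain_cons_cons, List.isChain_singleton,
    and_true]

theorem hasS3_of_lt {H : Finset (Finset (ZMod n))} {v : ZMod n} {p₁ p₂ p₃ p₄ : ℕ}
    (h₁ : 0 < p₁) (h₁₂ : p₁ < p₂) (h₂₃ : p₂ < p₃) (h₃₄ : p₃ < p₄) (h₄ : p₄ < n)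
    (hA : {v, v + p₁, v + p₃} ∈ H) (hB : {v, v + p₂, v + p₄} ∈ H) : HasS3 n H := by
  refine ⟨v, v + p₁, v + p₃, v + p₂, v + p₄, ?_, hA, hB⟩
  simp only [cwList_five_iff, add_sub_cancel_left]
  rw [ZMod.val_cast_of_lt (by omega), ZMod.val_cast_of_lt (by omega),
    ZMod.val_cast_of_lt (by omega), ZMod.val_cast_of_lt h₄]
  exact ⟨h₁, h₁₂, h₂₃, h₃₄⟩

theorem exists_offsets_of_card_eq_three [NeZero n] {T : Finset (ZMod n)} (hT : #T = 3) {v : ZMod n}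
    (hv : v ∈ T) : ∃ p q : ℕ, 0 < p ∧ p < q ∧ q < n ∧ T = {v, v + p, v + q} := by
  obtain ⟨x, y, hxy, hT'⟩ := card_eq_two.1 (show #(T.erase v) = 2 by
    rw [card_erase_of_mem hv, hT])
  have hoff : ∀ z ∈ T.erase v,
      0 < (z - v).val ∧ (z - v).val < n ∧ v + ((z - v).val : ZMod n) = z := by
    intro z hz
    refine ⟨?_, ZMod.val_lt _, by rw [ZMod.natCast_zmod_val, add_sub_cancel]⟩
    rw [Nat.pos_iff_ne_zero, ne_eq, ZMod.val_eq_zero, sub_eq_zero]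
    exact ne_of_mem_erase hz
  obtain ⟨hx₀, hxn, hx⟩ := hoff x (by simp [hT'])
  obtain ⟨hy₀, hyn, hy⟩ := hoff y (by simp [hT'])
  have hTxy : T = {v, x, y} := by rw [← insert_erase hv, hT']
  have hne : (x - v).val ≠ (y - v).val := fun h =>
    hxy (sub_left_injective (ZMod.val_injective n h))
  rcases hne.lt_or_gt with h | h
  · exact ⟨_, _, hx₀, h, hyn, by rw [hx, hy, hTxy]⟩
  · exact ⟨_, _, hy₀, h, hxn, by rw [hx, hy, hTxy, pair_comm]⟩

theorem add_natCast_sub (v : ZMod n) {p q : ℕ} (h : p ≤ q) : v + p + ↑(q - p) = v + q := by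
  rw [Nat.cast_sub h]; ring

theorem add_natCast_sub_self (v : ZMod n) {p : ℕ} (h : p ≤ n) : v + p + ↑(n - p) = v := by
  rw [add_natCast_sub v h, ZMod.natCast_self, add_zero]

-- `p < q` are the clockwise offsets from `v` of the other two vertices; `p + 2 ≤ q` says that
-- the side of `T` opposite `v` is a diagonal.
def Charged (n : ℕ) (v : ZMod n) (T : Finset (ZMod n)) : Prop :=
  ∃ p q : ℕ, 0 < p ∧ (p + 2 ≤ q ∨ p = 1 ∧ q = 2) ∧ q < n ∧ T = {v, v + p, v + q}

open scoped Classical in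
theorem two_le_card_charged [NeZero n] {T : Finset (ZMod n)} (hT : #T = 3) :
    2 ≤ #{v | Charged n v T} := by
  obtain ⟨v, hv⟩ := card_pos.1 (by omega : 0 < #T)
  obtain ⟨p, q, hp, hpq, hq, rfl⟩ := exists_offsets_of_card_eq_three hT hv
  have h₀ (h : p + 2 ≤ q ∨ p = 1 ∧ q = 2) : Charged n v {v, v + p, v + q} :=
    ⟨p, q, hp, h, hq, rfl⟩
  have h₁ (h : q + 2 ≤ n ∨ q = p + 1 ∧ p + 2 = n) : Charged n (v + p) {v, v + p, v + q} := by
    refine ⟨q - p, n - p, by omega, by omega, by omega, ?_⟩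
    rw [add_natCast_sub v hpq.le, add_natCast_sub_self v (by omega)]
    ext; simp only [mem_insert, mem_singleton]; tauto
  have h₂ (h : 2 ≤ p ∨ q + 1 = n ∧ p = 1) : Charged n (v + q) {v, v + p, v + q} := by
    refine ⟨n - q, n - q + p, by omega, by omega, by omega, ?_⟩
    rw [add_natCast_sub_self v hq.le, Nat.cast_add, ← add_assoc, add_natCast_sub_self v hq.le]
    ext; simp only [mem_insert, mem_singleton]; tauto
  have hne {i j : ℕ} (hij : i < j) (hj : j < n) : v + (i : ZMod n) ≠ v + j := fun h => by
    have := (ZMod.natCast_eq_natCast_iff_of_lt (hij.trans hj) hj).1 (add_left_cancel h)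
    omega
  have hne₀ {i : ℕ} (hi : 0 < i) (hin : i < n) : v ≠ v + i := by
    simpa using hne hi hin
  refine one_lt_card.2 ?_
  simp only [mem_filter, mem_univ, true_and]
  -- The gaps `p`, `q - p`, `n - q` of `T` are positive and sum to `n`.
  obtain ⟨ha, hb⟩ | ⟨ha, hb⟩ | ⟨ha, hb⟩ :
      ((p + 2 ≤ q ∨ p = 1 ∧ q = 2) ∧ (q + 2 ≤ n ∨ q = p + 1 ∧ p + 2 = n)) ∨
      ((p + 2 ≤ q ∨ p = 1 ∧ q = 2) ∧ (2 ≤ p ∨ q + 1 = n ∧ p = 1)) ∨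
      ((q + 2 ≤ n ∨ q = p + 1 ∧ p + 2 = n) ∧ (2 ≤ p ∨ q + 1 = n ∧ p = 1)) := by omega
  · exact ⟨_, h₀ ha, _, h₁ hb, hne₀ hp (by omega)⟩
  · exact ⟨_, h₀ ha, _, h₂ hb, hne₀ (by omega) hq⟩
  · exact ⟨_, h₁ ha, _, h₂ hb, hne hpq hq⟩

open scoped Classical in
theorem card_charged_le (hn : 3 ≤ n) {H : Finset (Finset (ZMod n))} (hH : ¬ HasS3 n H)
    (v : ZMod n) : #{T ∈ H | Charged n v T} ≤ n - 2 := by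
  set F : Finset (ℕ × ℕ) := {c ∈ Icc 1 (n - 1) ×ˢ Icc 1 (n - 1) |
    c.1 + 2 ≤ c.2 ∧ {v, v + c.1, v + c.2} ∈ H}
  have hF : #F ≤ n - 3 := by
    refine (card_le_of_forall_not_crosses (a := 1) (b := n - 1) ?_ ?_).trans (by omega)
    · intro c hc
      simp only [F, mem_filter, mem_product, mem_Icc] at hc
      omega
    · rintro c hc d hd ⟨h₁, h₂, h₃⟩
      simp only [F, mem_filter, mem_product, mem_Icc] at hc hd
      exact hH (hasS3_of_lt (v := v) (by omega) h₁ h₂ h₃ (by omega) hc.2.2 hd.2.2)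
  have hsub : {T ∈ H | Charged n v T} ⊆
      (insert (1, 2) F).image fun c => {v, v + (c.1 : ZMod n), v + (c.2 : ZMod n)} := by
    intro T hT
    obtain ⟨hTH, p, q, hp, hpq, hq, rfl⟩ := mem_filter.1 hT
    refine mem_image.2 ⟨(p, q), ?_, rfl⟩
    rcases hpq with hpq | ⟨rfl, rfl⟩
    · refine mem_insert_of_mem (mem_filter.2 ⟨?_, hpq, hTH⟩)
      simp only [mem_product, mem_Icc]
      omega
    · exact mem_insert_self _ _
  calc #{T ∈ H | Charged n v T} ≤ #(insert (1, 2) F) := (card_le_card hsub).trans card_image_le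
    _ ≤ #F + 1 := card_insert_le _ _
    _ ≤ n - 2 := by omega

open scoped Classical in
theorem card_mul_two_le [NeZero n] (hn : 3 ≤ n) {H : Finset (Finset (ZMod n))}
    (hH : IsCgh n H) (hS3 : ¬ HasS3 n H) : #H * 2 ≤ n * (n - 2) := by
  simpa using card_mul_le_card_mul (fun T v => Charged n v T) (t := univ)
    (fun T hT => two_le_card_charged (hH T hT)) (fun v _ => card_charged_le hn hS3 v)

end Polygon

section Construction

variable {n : ℕ}

def evenSideTriples (n : ℕ) [NeZero n] : Finset (Finset (ZMod n)) :=
  (range (n / 2)).biUnion fun k =>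
    (univ \ {((2 * k : ℕ) : ZMod n), ((2 * k + 1 : ℕ) : ZMod n)}).image
      fun y => {((2 * k : ℕ) : ZMod n), ((2 * k + 1 : ℕ) : ZMod n), y}

theorem mem_evenSideTriples [NeZero n] {T : Finset (ZMod n)} :
    T ∈ evenSideTriples n ↔ ∃ k < n / 2, ∃ y, y ≠ ((2 * k : ℕ) : ZMod n) ∧
      y ≠ ((2 * k + 1 : ℕ) : ZMod n) ∧
      {((2 * k : ℕ) : ZMod n), ((2 * k + 1 : ℕ) : ZMod n), y} = T := by
  simp only [evenSideTriples, mem_biUnion, mem_range, mem_image, mem_sdiff, mem_univ, true_and,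
    mem_insert, mem_singleton, not_or, ne_eq, and_assoc]

theorem eq_of_side_mem_triple {k l : ℕ} (hk : k < n / 2) (hl : l < n / 2) {y : ZMod n}
    (h₀ : ((2 * l : ℕ) : ZMod n) ∈
      ({((2 * k : ℕ) : ZMod n), ((2 * k + 1 : ℕ) : ZMod n), y} : Finset (ZMod n)))
    (h₁ : ((2 * l + 1 : ℕ) : ZMod n) ∈
      ({((2 * k : ℕ) : ZMod n), ((2 * k + 1 : ℕ) : ZMod n), y} : Finset (ZMod n))) :
    l = k := by
  have inj {i j : ℕ} (hi : i < n) (hj : j < n) (h : (i : ZMod n) = j) : i = j :=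
    (ZMod.natCast_eq_natCast_iff_of_lt hi hj).1 h
  simp only [mem_insert, mem_singleton] at h₀ h₁
  rcases h₀ with h₀ | h₀ | h₀
  · have := inj (by omega) (by omega) h₀; omega
  · have := inj (by omega) (by omega) h₀; omega
  · rcases h₁ with h₁ | h₁ | h₁
    · have := inj (by omega) (by omega) h₁; omega
    · have := inj (by omega) (by omega) h₁; omega
    · have := inj (by omega) (by omega) (h₁.trans h₀.symm); omega

theorem isCgh_evenSideTriples [NeZero n] : IsCgh n (evenSideTriples n) := by
  intro T hT
  obtain ⟨k, hk, y, hy₀, hy₁, rfl⟩ := mem_evenSideTriples.1 hT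
  refine card_eq_three.2 ⟨_, _, y, fun h => ?_, hy₀.symm, hy₁.symm, rfl⟩
  have := (ZMod.natCast_eq_natCast_iff_of_lt (n := n) (by omega) (by omega)).1 h
  omega

theorem card_evenSideTriples [NeZero n] :
    #(evenSideTriples n) = n / 2 * (n - 2) := by
  rw [evenSideTriples, card_biUnion, sum_const_nat, card_range]
  · intro k hk
    rw [mem_range] at hk
    rw [card_image_of_injOn, card_univ_sdiff, ZMod.card, card_pair]
    · intro h
      have := (ZMod.natCast_eq_natCast_iff_of_lt (n := n) (by omega) (by omega)).1 h
      omega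
    · intro y hy y' hy' h
      have hy'' : y ∈ ({((2 * k : ℕ) : ZMod n), ((2 * k + 1 : ℕ) : ZMod n), y'} : Finset _) :=
        by simp only at h; rw [← h]; simp
      simp only [mem_coe, mem_sdiff, mem_univ, mem_insert, mem_singleton, true_and, not_or] at hy
      simpa only [mem_insert, mem_singleton, hy.1, hy.2, false_or] using hy''
  · intro k hk l hl hkl
    refine disjoint_left.2 fun T hTk hTl => hkl ?_
    obtain ⟨y, -, rfl⟩ := mem_image.1 hTk
    obtain ⟨y', -, h⟩ := mem_image.1 hTl
    simp only [coe_range, Set.mem_Iio] at hk hl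
    exact (eq_of_side_mem_triple hk hl (y := y) (by rw [← h]; simp) (by rw [← h]; simp)).symm

theorem not_hasS3_evenSideTriples [NeZero n] : ¬ HasS3 n (evenSideTriples n) := by
  rintro ⟨v, a₁, a₂, b₁, b₂, hcw, hA, hB⟩
  rw [cwList_five_iff] at hcw
  have hside {x y : ZMod n} (h : {v, x, y} ∈ evenSideTriples n) : ∃ k < n / 2,
      ((2 * k : ℕ) : ZMod n) ∈ ({v, x, y} : Finset _) ∧
      ((2 * k + 1 : ℕ) : ZMod n) ∈ ({v, x, y} : Finset _) := by
    obtain ⟨k, hk, y, -, -, h⟩ := mem_evenSideTriples.1 h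
    exact ⟨k, hk, by simp [← h], by simp [← h]⟩
  have hoff {x y w : ZMod n} (h : w ∈ ({v, x, y} : Finset _)) :
      (w - v).val = 0 ∨ (w - v).val = (x - v).val ∨ (w - v).val = (y - v).val := by
    simp only [mem_insert, mem_singleton] at h
    rcases h with rfl | rfl | rfl <;> simp
  have hsucc (k : ℕ) :
      (((2 * k + 1 : ℕ) : ZMod n) - v).val = (((2 * k : ℕ) : ZMod n) - v).val + 1 ∨
      (((2 * k : ℕ) : ZMod n) - v).val + 1 = n ∧ (((2 * k + 1 : ℕ) : ZMod n) - v).val = 0 := by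
    rw [show ((2 * k + 1 : ℕ) : ZMod n) - v = ((2 * k : ℕ) : ZMod n) - v + 1 by push_cast; ring]
    exact ZMod.val_add_one_eq_or _
  obtain ⟨k, hk, hkA, hk'A⟩ := hside hA
  obtain ⟨l, hl, hlB, hl'B⟩ := hside hB
  have := hoff hkA; have := hoff hk'A; have := hoff hlB; have := hoff hl'B
  have := hsucc k; have := hsucc l; have := ZMod.val_lt (b₂ - v)
  -- With offsets `0 < a₁ < b₁ < a₂ < b₂`, the side `{2k, 2k+1}` of `{v, a₁, a₂}` can only be
  -- `{v, a₁}` and the side `{2l, 2l+1}` of `{v, b₁, b₂}` only `{b₂, v}`.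
  have hk₀ : (((2 * k : ℕ) : ZMod n) - v).val = 0 := by omega
  have hl₀ : (((2 * l + 1 : ℕ) : ZMod n) - v).val = 0 := by omega
  rw [ZMod.val_eq_zero, sub_eq_zero] at hk₀ hl₀
  have := (ZMod.natCast_eq_natCast_iff_of_lt (by omega) (by omega)).1 (hk₀.trans hl₀.symm)
  omega

end Construction

theorem ex_S3 (n : ℕ) (hn : 4 ≤ n) (hev : Even n) :
    IsGreatest {m : ℕ | ∃ H : Finset (Finset (ZMod n)),
        IsCgh n H ∧ ¬ HasS3 n H ∧ H.card = m}
      (n * (n - 2) / 2) := by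
  have : NeZero n := ⟨by omega⟩
  refine ⟨⟨evenSideTriples n, isCgh_evenSideTriples, not_hasS3_evenSideTriples, ?_⟩, ?_⟩
  · obtain ⟨m, rfl⟩ := hev
    rw [card_evenSideTriples, show m + m = 2 * m by ring, mul_assoc,
      Nat.mul_div_cancel_left _ two_pos, Nat.mul_div_cancel_left _ two_pos]
  · rintro _ ⟨H, hH, hS3, rfl⟩
    have := card_mul_two_le (by omega) hH hS3
    omega
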